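/- Let Q be the set of literals in the reified encoding β^n not occurring in the direct encoding β^n_d (i.e., literals formed with d_law, s_law, head, action, prec, all_h, prec_h, imp). Then for any program R whose literals are disjoint from Q, β^n ∪ R is a strong conservative extension of β^n_d ∪ R with respect to Q. -/

import Mathlib

/-- A ground rule of A-Prolog: head (none = ⊥, i.e. a constraint),
positive body atoms, and default-negated body atoms. -/
structure ASPRule (L : Type) where
  head : Option L
  pos : Set L
  neg : Set L

/-- `Closed X Y P`: `Y` is closed under the Gelfond–Lifschitz reduct of `P`
relative to `X`. -/
def Closed {L : Type} (X Y : Set L) (P : Set (ASPRule L)) : Prop :=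
  ∀ r ∈ P, (∀ l ∈ r.neg, l ∉ X) → r.pos ⊆ Y → ∃ l, r.head = some l ∧ l ∈ Y

/-- `X` is an answer set of `P`: `X` is minimal among the sets closed under
the reduct `P^X`. -/
def AnswerSet {L : Type} (P : Set (ASPRule L)) (X : Set L) : Prop :=
  Closed X X P ∧ ∀ Y ⊆ X, Closed X Y P → Y = X

/-- A fact. -/
def fact {L : Type} (a : L) : ASPRule L := ⟨some a, ∅, ∅⟩
/-- A fluent literal: a fluent together with a sign (`true` = positive). -/
abbrev FLit (F : Type) := F × Bool

/-- The complement of a fluent literal. -/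
def fcompl {F : Type} (l : FLit F) : FLit F := (l.1, !l.2)

/-- A dynamic causal law `causes(act, hd, pre)` with ordered preconditions. -/
structure DynLaw (A F : Type) where
  act : A
  hd : FLit F
  pre : List (FLit F)

/-- A static causal law `caused(hd, pre)` with ordered preconditions. -/
structure StatLaw (F : Type) where
  hd : FLit F
  pre : List (FLit F)

/-- An executability condition `impossible_if(act, pre)`. -/
structure ImpLaw (A F : Type) where
  act : A
  pre : List (FLit F)

/-- An action description of the language AL. -/
structure ActionDescr (A F : Type) where
  dyn : Set (DynLaw A F)
  stat : Set (StatLaw F)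
  imp : Set (ImpLaw A F)

/-- All literals of a list hold in `σ`. -/
def lsub {F : Type} (P : List (FLit F)) (σ : Set (FLit F)) : Prop :=
  ∀ l ∈ P, l ∈ σ

/-- Completeness: each fluent or its negation belongs to `σ`. -/
def FComplete {F : Type} (σ : Set (FLit F)) : Prop :=
  ∀ f : F, (f, true) ∈ σ ∨ (f, false) ∈ σ

/-- Consistency: no fluent literal occurs together with its complement. -/
def FConsistent {F : Type} (σ : Set (FLit F)) : Prop :=
  ∀ l ∈ σ, fcompl l ∉ σ

/-- Closure under the static causal laws. -/
def ClosedStat {A F : Type} (D : ActionDescr A F) (σ : Set (FLit F)) : Prop :=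
  ∀ s ∈ D.stat, lsub s.pre σ → s.hd ∈ σ

/-- A state of the transition system described by `D`. -/
def IsState {A F : Type} (D : ActionDescr A F) (σ : Set (FLit F)) : Prop :=
  FComplete σ ∧ FConsistent σ ∧ ClosedStat D σ

/-- `Cn_Z(S)`: the smallest set containing `S`, closed under static laws. -/
def CnZ {A F : Type} (D : ActionDescr A F) (S : Set (FLit F)) : Set (FLit F) :=
  ⋂₀ { X | S ⊆ X ∧ ∀ s ∈ D.stat, lsub s.pre X → s.hd ∈ X }

/-- `E(a,σ)`: the direct effects of compound action `a` in `σ`. -/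
def dirEff {A F : Type} (D : ActionDescr A F) (a : Set A) (σ : Set (FLit F)) :
    Set (FLit F) :=
  { l | ∃ d ∈ D.dyn, d.act ∈ a ∧ lsub d.pre σ ∧ d.hd = l }

/-- The McCain–Turner transition relation. -/
def ALTrans {A F : Type} (D : ActionDescr A F) (σ : Set (FLit F)) (a : Set A)
    (σ' : Set (FLit F)) : Prop :=
  IsState D σ ∧ IsState D σ' ∧
  (∀ i ∈ D.imp, i.act ∈ a → ¬ lsub i.pre σ) ∧
  σ' = CnZ D (dirEff D a σ ∪ (σ ∩ σ'))
/-- Names of reified laws: a dynamic or a static law. -/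
abbrev LawName (A F : Type) := DynLaw A F ⊕ StatLaw F

/-- Atoms of the reified encoding. -/
inductive AtomR (A F : Type) where
  | h : FLit F → ℕ → AtomR A F
  | o : A → ℕ → AtomR A F
  | hpd : A → ℕ → AtomR A F
  | obs : FLit F → ℕ → AtomR A F
  | noo : A → ℕ → AtomR A F          -- the literal ¬o(a,t) of the choice rules
  | dlaw : LawName A F → AtomR A F
  | slaw : LawName A F → AtomR A F
  | hd : LawName A F → FLit F → AtomR A F
  | act : LawName A F → A → AtomR A F
  | prec : LawName A F → ℕ → Option (FLit F) → AtomR A F   -- `none` is `nil`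
  | allh : LawName A F → ℕ → ℕ → AtomR A F
  | prech : LawName A F → ℕ → AtomR A F

/-- The facts `prec(d,1,l1),...,prec(d,m,lm),prec(d,m+1,nil)`. -/
def precFacts {A F : Type} (nm : LawName A F) (pre : List (FLit F)) :
    Set (ASPRule (AtomR A F)) :=
  { r | (∃ i l, pre[i]? = some l ∧ r = fact (AtomR.prec nm (i+1) (some l))) ∨
        r = fact (AtomR.prec nm (pre.length + 1) none) }

/-- `α(SD)` over horizon `n`: reifying facts for dynamic and static laws, and
constraints for executability conditions. -/
def alphaSD {A F : Type} (D : ActionDescr A F) (n : ℕ) :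
    Set (ASPRule (AtomR A F)) :=
  { r | ∃ d ∈ D.dyn, r = fact (AtomR.dlaw (Sum.inl d)) ∨
        r = fact (AtomR.hd (Sum.inl d) d.hd) ∨
        r = fact (AtomR.act (Sum.inl d) d.act) ∨ r ∈ precFacts (Sum.inl d) d.pre } ∪
  { r | ∃ s ∈ D.stat, r = fact (AtomR.slaw (Sum.inr s)) ∨
        r = fact (AtomR.hd (Sum.inr s) s.hd) ∨ r ∈ precFacts (Sum.inr s) s.pre } ∪
  { r | ∃ i ∈ D.imp, ∃ t < n,
        r = ⟨none, { x | ∃ l ∈ i.pre, x = AtomR.h l t } ∪ {AtomR.o i.act t}, ∅⟩ }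

/-- The interpreter rules (1)-(7) of the program `Π`, grounded over horizon `n`. -/
def interp (A F : Type) (n : ℕ) : Set (ASPRule (AtomR A F)) :=
  { r | ∃ nm : LawName A F, ∃ l : FLit F, ∃ a : A, ∃ t < n,
      r = ⟨some (AtomR.h l (t+1)),
           {AtomR.dlaw nm, AtomR.hd nm l, AtomR.act nm a, AtomR.o a t,
            AtomR.prech nm t}, ∅⟩ } ∪
  { r | ∃ nm : LawName A F, ∃ l : FLit F, ∃ t ≤ n,
      r = ⟨some (AtomR.h l t), {AtomR.slaw nm, AtomR.hd nm l, AtomR.prech nm t}, ∅⟩ } ∪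
  { r | ∃ nm : LawName A F, ∃ N : ℕ, ∃ t ≤ n,
      r = ⟨some (AtomR.allh nm N t), {AtomR.prec nm N none}, ∅⟩ } ∪
  { r | ∃ nm : LawName A F, ∃ N : ℕ, ∃ p : FLit F, ∃ t ≤ n,
      r = ⟨some (AtomR.allh nm N t),
           {AtomR.prec nm N (some p), AtomR.h p t, AtomR.allh nm (N+1) t}, ∅⟩ } ∪
  { r | ∃ nm : LawName A F, ∃ t ≤ n,
      r = ⟨some (AtomR.prech nm t), {AtomR.allh nm 1 t}, ∅⟩ } ∪
  { r | ∃ l : FLit F, ∃ t < n,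
      r = ⟨some (AtomR.h l (t+1)), {AtomR.h l t}, {AtomR.h (fcompl l) (t+1)}⟩ } ∪
  { r | ∃ l : FLit F, ∃ t ≤ n,
      r = ⟨none, {AtomR.h l t, AtomR.h (fcompl l) t}, ∅⟩ }

/-- The interpreter rules (8)-(10): `o(A,T) ← hpd(A,T)`, `h(L,0) ← obs(L,0)`,
and the reality check `← obs(L,T), not h(L,T)`. -/
def interpHist (A F : Type) (n : ℕ) : Set (ASPRule (AtomR A F)) :=
  { r | ∃ e : A, ∃ t < n, r = ⟨some (AtomR.o e t), {AtomR.hpd e t}, ∅⟩ } ∪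
  { r | ∃ l : FLit F, r = ⟨some (AtomR.h l 0), {AtomR.obs l 0}, ∅⟩ } ∪
  { r | ∃ l : FLit F, ∃ t ≤ n, r = ⟨none, {AtomR.obs l t}, {AtomR.h l t}⟩ }

/-- A recorded history: observations `obs(l,t)` and happenings `hpd(a,t)`. -/
structure Hist (A F : Type) where
  obs : Set (FLit F × ℕ)
  hpd : Set (A × ℕ)

/-- Union of two histories. -/
def Hist.union {A F : Type} (Γ Γ' : Hist A F) : Hist A F :=
  ⟨Γ.obs ∪ Γ'.obs, Γ.hpd ∪ Γ'.hpd⟩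

/-- The facts of a recorded history. -/
def histFacts {A F : Type} (Γ : Hist A F) : Set (ASPRule (AtomR A F)) :=
  { r | ∃ p ∈ Γ.obs, r = fact (AtomR.obs p.1 p.2) } ∪
  { r | ∃ p ∈ Γ.hpd, r = fact (AtomR.hpd p.1 p.2) }

/-- The reified encoding `α(SD,Γn)` of the domain description. -/
def alphaProg {A F : Type} (D : ActionDescr A F) (n : ℕ) (Γ : Hist A F) :
    Set (ASPRule (AtomR A F)) :=
  alphaSD D n ∪ interp A F n ∪ interpHist A F n ∪ histFacts Γ

/-- The awareness axioms `h(F,0) ← not h(¬F,0)` and `h(¬F,0) ← not h(F,0)`. -/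
def awareness (A F : Type) : Set (ASPRule (AtomR A F)) :=
  { r | ∃ f : F, r = ⟨some (AtomR.h (f, true) 0), ∅, {AtomR.h (f, false) 0}⟩ ∨
        r = ⟨some (AtomR.h (f, false) 0), ∅, {AtomR.h (f, true) 0}⟩ }

/-- The path `⟨σ0,a0,...,a_{n-1},σn⟩` is a model of the recorded history `Γ`. -/
def IsModelOf {A F : Type} (D : ActionDescr A F) (n : ℕ) (Γ : Hist A F)
    (σ : ℕ → Set (FLit F)) (a : ℕ → Set A) : Prop :=
  (∀ t < n, ALTrans D (σ t) (a t) (σ (t+1))) ∧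
  (∀ t < n, a t = { e | (e, t) ∈ Γ.hpd }) ∧
  (∀ l t, (l, t) ∈ Γ.obs → t ≤ n → l ∈ σ t)

/-- A set `X` of atoms defines the sequence `⟨σ0,a0,...,a_{n-1},σn⟩`. -/
def DefinesR {A F : Type} (n : ℕ) (X : Set (AtomR A F)) (σ : ℕ → Set (FLit F))
    (a : ℕ → Set A) : Prop :=
  (∀ k ≤ n, σ k = { l | AtomR.h l k ∈ X }) ∧
  (∀ k < n, a k = { e | AtomR.o e k ∈ X })

/-- The direct encoding `β^n_d(SD)`: rules for dynamic laws, static laws,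
executability conditions, inertia, and consistency constraints, formulated
with the atoms `h` and `o` only. -/
def betaNd {A F : Type} (D : ActionDescr A F) (n : ℕ) :
    Set (ASPRule (AtomR A F)) :=
  { r | ∃ d ∈ D.dyn, ∃ t < n,
      r = ⟨some (AtomR.h d.hd (t+1)),
           { x | ∃ l ∈ d.pre, x = AtomR.h l t } ∪ {AtomR.o d.act t}, ∅⟩ } ∪
  { r | ∃ s ∈ D.stat, ∃ t ≤ n,
      r = ⟨some (AtomR.h s.hd t), { x | ∃ l ∈ s.pre, x = AtomR.h l t }, ∅⟩ } ∪
  { r | ∃ i ∈ D.imp, ∃ t < n,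
      r = ⟨none, { x | ∃ l ∈ i.pre, x = AtomR.h l t } ∪ {AtomR.o i.act t}, ∅⟩ } ∪
  { r | ∃ l : FLit F, ∃ t < n,
      r = ⟨some (AtomR.h l (t+1)), {AtomR.h l t}, {AtomR.h (fcompl l) (t+1)}⟩ } ∪
  { r | ∃ l : FLit F, ∃ t ≤ n,
      r = ⟨none, {AtomR.h l t, AtomR.h (fcompl l) t}, ∅⟩ }

/-- The reified encoding `β^n(SD)`: the reifying facts `α(SD)` together with
the interpreter rules (1)-(7). -/
def betaN {A F : Type} (D : ActionDescr A F) (n : ℕ) :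
    Set (ASPRule (AtomR A F)) :=
  alphaSD D n ∪ interp A F n

/-- Atoms formed with the auxiliary reified predicates
`d_law, s_law, head, action, prec, all_h, prec_h`. -/
def ReifiedAtom {A F : Type} : AtomR A F → Prop
  | AtomR.dlaw _ => True
  | AtomR.slaw _ => True
  | AtomR.hd _ _ => True
  | AtomR.act _ _ => True
  | AtomR.prec _ _ _ => True
  | AtomR.allh _ _ _ => True
  | AtomR.prech _ _ => True
  | _ => False

/-- The literals occurring in a rule. -/
def ruleLits {L : Type} (r : ASPRule L) : Set L :=
  (match r.head with | some l => {l} | none => ∅) ∪ r.pos ∪ r.neg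

/-!
The reified atoms of `β^n` carry no information of their own. Every set `Z` closed under the reduct
of `β^n` contains `auxAtoms D n Z`: the reifying facts, and the `all_h`/`prec_h` atoms recording
which preconditions hold in `Z`. Conversely, if `Z` is closed under the reduct of `β^n_d`, then so
is `Z ∪ auxAtoms D n Z` under that of `β^n`, since rules (1) and (2) of the interpreter fire exactly
when the direct rule for the same law does. Thus `Z ↦ Z \ Q` and `Z ↦ Z ∪ auxAtoms D n Z` carry
reduct-closed sets of each program to those of the other. No atom of `Q` occurs negatively, so
adding or removing `Q`-atoms does not change the reduct, and both maps preserve minimality. The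
rules of `R` do not mention `Q` and are carried along unchanged.
-/

section AnswerSets

variable {L : Type}

def IsConservativeExtension (P₂ P₁ : Set (ASPRule L)) (Q : Set L) : Prop :=
  (∀ X, AnswerSet P₂ X → AnswerSet P₁ (X \ Q)) ∧
    ∀ X, AnswerSet P₁ X → ∃ B ⊆ Q, AnswerSet P₂ (X ∪ B)

lemma mem_ruleLits_of_head_eq {r : ASPRule L} {x : L} (h : r.head = some x) :
    x ∈ ruleLits r := by
  simp [ruleLits, h]

lemma pos_subset_ruleLits (r : ASPRule L) : r.pos ⊆ ruleLits r :=
  fun _ hx => Or.inl (Or.inr hx)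

lemma neg_subset_ruleLits (r : ASPRule L) : r.neg ⊆ ruleLits r :=
  fun _ hx => Or.inr hx

variable {X X' Y Y' : Set L} {P P' : Set (ASPRule L)} {Q : Set L}

lemma closed_union_iff : Closed X Y (P ∪ P') ↔ Closed X Y P ∧ Closed X Y P' :=
  ⟨fun h => ⟨fun r hr => h r (Or.inl hr), fun r hr => h r (Or.inr hr)⟩,
    fun h r hr => hr.elim (h.1 r) (h.2 r)⟩

lemma Closed.head_mem (h : Closed X Y P) {a : L} {pos neg : Set L}
    (hr : ⟨some a, pos, neg⟩ ∈ P) (hneg : ∀ l ∈ neg, l ∉ X) (hpos : pos ⊆ Y) : a ∈ Y := by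
  obtain ⟨l, hl, hlY⟩ := h _ hr hneg hpos
  rwa [Option.some_inj.1 hl]

lemma Closed.fact_mem (h : Closed X Y P) {a : L} (hr : fact a ∈ P) : a ∈ Y :=
  h.head_mem hr (fun _ => False.elim) (Set.empty_subset Y)

lemma Closed.body_not_subset (h : Closed X Y P) {pos neg : Set L}
    (hr : ⟨none, pos, neg⟩ ∈ P) (hneg : ∀ l ∈ neg, l ∉ X) : ¬ pos ⊆ Y := fun hpos => by
  obtain ⟨l, hl, -⟩ := h _ hr hneg hpos
  cases hl

lemma Closed.congr_left (hP : ∀ r ∈ P, ∀ x ∈ r.neg, x ∉ Q) (hX : X \ Q = X' \ Q)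
    (h : Closed X Y P) : Closed X' Y P := by
  intro r hr hneg hpos
  refine h r hr (fun l hl hlX => hneg l hl ?_) hpos
  have : l ∈ X' \ Q := hX ▸ ⟨hlX, hP r hr l hl⟩
  exact this.1

lemma Closed.congr_right (hP : ∀ r ∈ P, ∀ x ∈ ruleLits r, x ∉ Q) (hY : Y \ Q = Y' \ Q)
    (h : Closed X Y P) : Closed X Y' P := by
  intro r hr hneg hpos
  have hpos' : r.pos ⊆ Y := fun x hx => by
    have : x ∈ Y \ Q := hY ▸ ⟨hpos hx, hP r hr x (pos_subset_ruleLits r hx)⟩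
    exact this.1
  obtain ⟨l, hl, hlY⟩ := h r hr hneg hpos'
  have : l ∈ Y' \ Q := hY ▸ ⟨hlY, hP r hr l (mem_ruleLits_of_head_eq hl)⟩
  exact ⟨l, hl, this.1⟩

lemma AnswerSet.disjoint (hP : ∀ r ∈ P, ∀ x, r.head = some x → x ∉ Q)
    (hX : AnswerSet P X) : Disjoint X Q := by
  have hclosed : Closed X (X \ Q) P := fun r hr hneg hpos => by
    obtain ⟨l, hl, hlX⟩ := hX.1 r hr hneg (hpos.trans Set.sdiff_subset)
    exact ⟨l, hl, hlX, hP r hr l hl⟩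
  rw [← hX.2 _ Set.sdiff_subset hclosed]
  exact Set.disjoint_sdiff_left

/-- A witness that the `Q`-atoms of `P₂` are auxiliary: over `Z` they are `aux Z`, and removing or
adding them translates between reduct-closed sets of `P₂` and of `P₁`. -/
structure AuxCompletion (P₁ P₂ : Set (ASPRule L)) (Q : Set L) where
  aux : Set L → Set L
  aux_subset : ∀ S, aux S ⊆ Q
  aux_mono : Monotone aux
  neg_notMem : ∀ r ∈ P₁, ∀ x ∈ r.neg, x ∉ Q
  head_notMem : ∀ r ∈ P₁, ∀ x, r.head = some x → x ∉ Q
  aux_subset_of_closed : ∀ W Z, Closed W Z P₂ → aux Z ⊆ Z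
  closed_diff : ∀ W Z, Closed W Z P₂ → Closed W (Z \ Q) P₁
  closed_union_aux : ∀ W Z, Disjoint Z Q → Closed W Z P₁ → Closed W (Z ∪ aux Z) P₂

namespace AuxCompletion

variable {P₁ P₂ : Set (ASPRule L)}

lemma union_aux_diff (c : AuxCompletion P₁ P₂ Q) (S : Set L) :
    (S ∪ c.aux S) \ Q = S \ Q := by
  rw [Set.union_sdiff_distrib, Set.sdiff_eq_empty.2 (c.aux_subset S), Set.union_empty]

def union (c : AuxCompletion P₁ P₂ Q) {R : Set (ASPRule L)}
    (hR : ∀ r ∈ R, ∀ x ∈ ruleLits r, x ∉ Q) : AuxCompletion (P₁ ∪ R) (P₂ ∪ R) Q where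
  aux := c.aux
  aux_subset := c.aux_subset
  aux_mono := c.aux_mono
  neg_notMem r hr := hr.elim (c.neg_notMem r) fun hr x hx => hR r hr x (neg_subset_ruleLits r hx)
  head_notMem r hr :=
    hr.elim (c.head_notMem r) fun hr x hx => hR r hr x (mem_ruleLits_of_head_eq hx)
  aux_subset_of_closed W Z h := c.aux_subset_of_closed W Z (closed_union_iff.1 h).1
  closed_diff W Z h := closed_union_iff.2
    ⟨c.closed_diff W Z (closed_union_iff.1 h).1,
      (closed_union_iff.1 h).2.congr_right hR sdiff_idem.symm⟩
  closed_union_aux W Z hZ h := closed_union_iff.2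
    ⟨c.closed_union_aux W Z hZ (closed_union_iff.1 h).1,
      (closed_union_iff.1 h).2.congr_right hR (c.union_aux_diff Z).symm⟩

lemma answerSet_diff (c : AuxCompletion P₁ P₂ Q) (hX : AnswerSet P₂ X) :
    AnswerSet P₁ (X \ Q) := by
  have hXX : (X \ Q) \ Q = X \ Q := sdiff_idem
  refine ⟨(c.closed_diff X X hX.1).congr_left c.neg_notMem hXX.symm, fun Z hZX hZ => ?_⟩
  have hZQ : Disjoint Z Q := Set.disjoint_of_subset_left hZX Set.disjoint_sdiff_left
  have hZ' : Closed X (Z ∪ c.aux Z) P₂ :=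
    c.closed_union_aux X Z hZQ (hZ.congr_left c.neg_notMem hXX)
  have hsub : Z ∪ c.aux Z ⊆ X := Set.union_subset (hZX.trans Set.sdiff_subset)
    ((c.aux_mono (hZX.trans Set.sdiff_subset)).trans (c.aux_subset_of_closed X X hX.1))
  rw [← hX.2 _ hsub hZ', c.union_aux_diff, hZQ.sdiff_eq_left]

lemma answerSet_union_aux (c : AuxCompletion P₁ P₂ Q) (hX : AnswerSet P₁ X) :
    AnswerSet P₂ (X ∪ c.aux X) := by
  have hXQ : Disjoint X Q := hX.disjoint c.head_notMem
  have hdiff : (X ∪ c.aux X) \ Q = X \ Q := c.union_aux_diff X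
  refine ⟨c.closed_union_aux _ X hXQ (hX.1.congr_left c.neg_notMem hdiff.symm),
    fun Z hZX hZ => ?_⟩
  have hZQ : Closed X (Z \ Q) P₁ := (c.closed_diff _ Z hZ).congr_left c.neg_notMem hdiff
  have hZQX : Z \ Q ⊆ X := by
    rw [← hXQ.sdiff_eq_left, ← hdiff]
    exact Set.sdiff_subset_sdiff_left hZX
  have hXZ : X = Z \ Q := (hX.2 _ hZQX hZQ).symm
  refine hZX.antisymm (Set.union_subset (hXZ ▸ Set.sdiff_subset) ?_)
  exact hXZ ▸ (c.aux_mono Set.sdiff_subset).trans (c.aux_subset_of_closed _ Z hZ)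

theorem isConservativeExtension (c : AuxCompletion P₁ P₂ Q) :
    IsConservativeExtension P₂ P₁ Q :=
  ⟨fun _ => c.answerSet_diff, fun X hX => ⟨c.aux X, c.aux_subset X, c.answerSet_union_aux hX⟩⟩

end AuxCompletion

end AnswerSets

section Reified

variable {A F : Type}

def lawIn (D : ActionDescr A F) : LawName A F → Prop
  | .inl d => d ∈ D.dyn
  | .inr s => s ∈ D.stat

def lawHd : LawName A F → FLit F
  | .inl d => d.hd
  | .inr s => s.hd

def lawPre : LawName A F → List (FLit F)
  | .inl d => d.pre
  | .inr s => s.pre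

/-- The reified atoms that `β^n` derives on top of the `h`-atoms of `S`; `all_h(d, N, t)`
says that the preconditions of `d` from the `N`-th one on hold at time `t`. `prec` numbers the
preconditions from 1, hence the `N - 1` into the 0-indexed list. -/
def auxAtoms (D : ActionDescr A F) (n : ℕ) (S : Set (AtomR A F)) : Set (AtomR A F) :=
  fun x => match x with
  | .dlaw (.inl d) => d ∈ D.dyn
  | .slaw (.inr s) => s ∈ D.stat
  | .hd nm l => lawIn D nm ∧ l = lawHd nm
  | .act (.inl d) a => d ∈ D.dyn ∧ a = d.act
  | .prec nm N p =>
      lawIn D nm ∧ 1 ≤ N ∧ N ≤ (lawPre nm).length + 1 ∧ p = (lawPre nm)[N - 1]?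
  | .allh nm N t => lawIn D nm ∧ t ≤ n ∧ 1 ≤ N ∧ N ≤ (lawPre nm).length + 1 ∧
      ∀ l ∈ (lawPre nm).drop (N - 1), .h l t ∈ S
  | .prech nm t => lawIn D nm ∧ t ≤ n ∧ ∀ l ∈ lawPre nm, .h l t ∈ S
  | _ => False

variable {D : ActionDescr A F} {n : ℕ} {S W Z : Set (AtomR A F)}

lemma auxAtoms_subset_reified : auxAtoms D n S ⊆ {x | ReifiedAtom x} := by
  intro x hx
  cases x <;> trivial

lemma auxAtoms_mono : Monotone (auxAtoms (A := A) D n) := by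
  intro S S' hSS x hx
  cases x with
  | dlaw nm => cases nm <;> exact hx
  | slaw nm => cases nm <;> exact hx
  | act nm a => cases nm <;> exact hx
  | allh nm N t =>
    obtain ⟨hnm, ht, h1, h2, hpre⟩ := hx
    exact ⟨hnm, ht, h1, h2, fun l hl => hSS (hpre l hl)⟩
  | prech nm t =>
    obtain ⟨hnm, ht, hpre⟩ := hx
    exact ⟨hnm, ht, fun l hl => hSS (hpre l hl)⟩
  | _ => exact hx

lemma mem_precFacts_iff {nm : LawName A F} {pre : List (FLit F)} {r : ASPRule (AtomR A F)} :
    r ∈ precFacts nm pre ↔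
      ∃ N, 1 ≤ N ∧ N ≤ pre.length + 1 ∧ r = fact (.prec nm N pre[N - 1]?) := by
  constructor
  · rintro (⟨i, l, hl, rfl⟩ | rfl)
    · have hi : i < pre.length := (List.getElem?_eq_some_iff.1 hl).1
      exact ⟨i + 1, by omega, by omega, by simp [hl]⟩
    · exact ⟨pre.length + 1, by omega, le_rfl, by simp⟩
  · rintro ⟨N, h1, h2, rfl⟩
    obtain ⟨i, rfl⟩ : ∃ i, N = i + 1 := ⟨N - 1, by omega⟩
    rcases Nat.lt_or_ge i pre.length with hi | hi
    · have hget := List.getElem?_eq_getElem hi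
      exact Or.inl ⟨i, pre[i], hget, by simp [hget]⟩
    · obtain rfl : i = pre.length := by omega
      exact Or.inr (by simp)

lemma fact_dlaw_mem_betaN {d : DynLaw A F} (hd : d ∈ D.dyn) :
    fact (.dlaw (.inl d)) ∈ betaN D n :=
  Or.inl (Or.inl (Or.inl ⟨d, hd, Or.inl rfl⟩))

lemma fact_act_mem_betaN {d : DynLaw A F} (hd : d ∈ D.dyn) :
    fact (.act (.inl d) d.act) ∈ betaN D n :=
  Or.inl (Or.inl (Or.inl ⟨d, hd, Or.inr (Or.inr (Or.inl rfl))⟩))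

lemma fact_slaw_mem_betaN {s : StatLaw F} (hs : s ∈ D.stat) :
    fact (.slaw (.inr s)) ∈ betaN D n :=
  Or.inl (Or.inl (Or.inr ⟨s, hs, Or.inl rfl⟩))

lemma fact_hd_mem_betaN {nm : LawName A F} (hnm : lawIn D nm) :
    fact (.hd nm (lawHd nm)) ∈ betaN D n := by
  cases nm with
  | inl d => exact Or.inl (Or.inl (Or.inl ⟨d, hnm, Or.inr (Or.inl rfl)⟩))
  | inr s => exact Or.inl (Or.inl (Or.inr ⟨s, hnm, Or.inr (Or.inl rfl)⟩))

lemma fact_prec_mem_betaN {nm : LawName A F} (hnm : lawIn D nm) {N : ℕ} (h1 : 1 ≤ N)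
    (h2 : N ≤ (lawPre nm).length + 1) :
    fact (.prec nm N (lawPre nm)[N - 1]?) ∈ betaN D n := by
  have hprec : fact (.prec nm N (lawPre nm)[N - 1]?) ∈ precFacts nm (lawPre nm) :=
    mem_precFacts_iff.2 ⟨N, h1, h2, rfl⟩
  cases nm with
  | inl d => exact Or.inl (Or.inl (Or.inl ⟨d, hnm, Or.inr (Or.inr (Or.inr hprec))⟩))
  | inr s => exact Or.inl (Or.inl (Or.inr ⟨s, hnm, Or.inr (Or.inr hprec)⟩))

lemma impConstraint_mem_betaN {i : ImpLaw A F} (hi : i ∈ D.imp) {t : ℕ} (ht : t < n) :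
    ⟨none, {x | ∃ l ∈ i.pre, x = .h l t} ∪ {.o i.act t}, ∅⟩ ∈ betaN D n :=
  Or.inl (Or.inr ⟨i, hi, t, ht, rfl⟩)

lemma dynInterp_mem_betaN (nm : LawName A F) (l : FLit F) (a : A) {t : ℕ} (ht : t < n) :
    ⟨some (.h l (t + 1)), {.dlaw nm, .hd nm l, .act nm a, .o a t, .prech nm t}, ∅⟩ ∈
      betaN D n :=
  Or.inr (Or.inl (Or.inl (Or.inl (Or.inl (Or.inl (Or.inl ⟨nm, l, a, t, ht, rfl⟩))))))

lemma statInterp_mem_betaN (nm : LawName A F) (l : FLit F) {t : ℕ} (ht : t ≤ n) :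
    ⟨some (.h l t), {.slaw nm, .hd nm l, .prech nm t}, ∅⟩ ∈ betaN D n :=
  Or.inr (Or.inl (Or.inl (Or.inl (Or.inl (Or.inl (Or.inr ⟨nm, l, t, ht, rfl⟩))))))

lemma allhNil_mem_betaN (nm : LawName A F) (N : ℕ) {t : ℕ} (ht : t ≤ n) :
    ⟨some (.allh nm N t), {.prec nm N none}, ∅⟩ ∈ betaN D n :=
  Or.inr (Or.inl (Or.inl (Or.inl (Or.inl (Or.inr ⟨nm, N, t, ht, rfl⟩)))))

lemma allhCons_mem_betaN (nm : LawName A F) (N : ℕ) (p : FLit F) {t : ℕ} (ht : t ≤ n) :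
    ⟨some (.allh nm N t), {.prec nm N (some p), .h p t, .allh nm (N + 1) t}, ∅⟩ ∈
      betaN D n :=
  Or.inr (Or.inl (Or.inl (Or.inl (Or.inr ⟨nm, N, p, t, ht, rfl⟩))))

lemma prech_mem_betaN (nm : LawName A F) {t : ℕ} (ht : t ≤ n) :
    ⟨some (.prech nm t), {.allh nm 1 t}, ∅⟩ ∈ betaN D n :=
  Or.inr (Or.inl (Or.inl (Or.inr ⟨nm, t, ht, rfl⟩)))

lemma inertia_mem_betaN (l : FLit F) {t : ℕ} (ht : t < n) :
    ⟨some (.h l (t + 1)), {.h l t}, {.h (fcompl l) (t + 1)}⟩ ∈ betaN D n :=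
  Or.inr (Or.inl (Or.inr ⟨l, t, ht, rfl⟩))

lemma consistency_mem_betaN (l : FLit F) {t : ℕ} (ht : t ≤ n) :
    ⟨none, {.h l t, .h (fcompl l) t}, ∅⟩ ∈ betaN D n :=
  Or.inr (Or.inr ⟨l, t, ht, rfl⟩)

lemma dynRule_mem_betaNd {d : DynLaw A F} (hd : d ∈ D.dyn) {t : ℕ} (ht : t < n) :
    ⟨some (.h d.hd (t + 1)), {x | ∃ l ∈ d.pre, x = .h l t} ∪ {.o d.act t}, ∅⟩ ∈
      betaNd D n :=
  Or.inl (Or.inl (Or.inl (Or.inl ⟨d, hd, t, ht, rfl⟩)))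

lemma statRule_mem_betaNd {s : StatLaw F} (hs : s ∈ D.stat) {t : ℕ} (ht : t ≤ n) :
    ⟨some (.h s.hd t), {x | ∃ l ∈ s.pre, x = .h l t}, ∅⟩ ∈ betaNd D n :=
  Or.inl (Or.inl (Or.inl (Or.inr ⟨s, hs, t, ht, rfl⟩)))

lemma impConstraint_mem_betaNd {i : ImpLaw A F} (hi : i ∈ D.imp) {t : ℕ} (ht : t < n) :
    ⟨none, {x | ∃ l ∈ i.pre, x = .h l t} ∪ {.o i.act t}, ∅⟩ ∈ betaNd D n :=
  Or.inl (Or.inl (Or.inr ⟨i, hi, t, ht, rfl⟩))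

lemma inertia_mem_betaNd (l : FLit F) {t : ℕ} (ht : t < n) :
    ⟨some (.h l (t + 1)), {.h l t}, {.h (fcompl l) (t + 1)}⟩ ∈ betaNd D n :=
  Or.inl (Or.inr ⟨l, t, ht, rfl⟩)

lemma consistency_mem_betaNd (l : FLit F) {t : ℕ} (ht : t ≤ n) :
    ⟨none, {.h l t, .h (fcompl l) t}, ∅⟩ ∈ betaNd D n :=
  Or.inr ⟨l, t, ht, rfl⟩

lemma betaNd_neg_not_reified :
    ∀ r ∈ betaNd D n, ∀ x ∈ r.neg, x ∉ {x | ReifiedAtom x} := by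
  rintro r ((((⟨d, -, t, -, rfl⟩ | ⟨s, -, t, -, rfl⟩) | ⟨i, -, t, -, rfl⟩) | ⟨l, t, -, rfl⟩) |
    ⟨l, t, -, rfl⟩) x hx
  all_goals first | exact hx.elim | exact hx ▸ not_false

lemma betaNd_head_not_reified :
    ∀ r ∈ betaNd D n, ∀ x, r.head = some x → x ∉ {x | ReifiedAtom x} := by
  rintro r ((((⟨d, -, t, -, rfl⟩ | ⟨s, -, t, -, rfl⟩) | ⟨i, -, t, -, rfl⟩) | ⟨l, t, -, rfl⟩) |
    ⟨l, t, -, rfl⟩) x hx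
  all_goals cases hx <;> exact not_false

lemma allh_mem_of_closed_betaN (h : Closed W Z (betaN D n)) {nm : LawName A F}
    (hnm : lawIn D nm) {t : ℕ} (ht : t ≤ n) {N : ℕ} (h1 : 1 ≤ N)
    (h2 : N ≤ (lawPre nm).length + 1) (hpre : ∀ l ∈ (lawPre nm).drop (N - 1), .h l t ∈ Z) :
    .allh nm N t ∈ Z := by
  induction h2 using Nat.decreasingInduction with
  | self =>
    have hnil := h.fact_mem (fact_prec_mem_betaN hnm h1 le_rfl)
    rw [List.getElem?_eq_none (by omega)] at hnil
    exact h.head_mem (allhNil_mem_betaN nm _ ht) (fun _ => False.elim)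
      (Set.singleton_subset_iff.2 hnil)
  | of_succ N hN ih =>
    have hlt : N - 1 < (lawPre nm).length := by omega
    have hprec := h.fact_mem (fact_prec_mem_betaN hnm h1 hN.le)
    rw [List.getElem?_eq_getElem hlt] at hprec
    rw [List.drop_eq_getElem_cons hlt, Nat.sub_add_cancel h1] at hpre
    refine h.head_mem (allhCons_mem_betaN nm N (lawPre nm)[N - 1] ht) (fun _ => False.elim)
      ?_
    simp only [Set.insert_subset_iff, Set.singleton_subset_iff]
    exact ⟨hprec, hpre _ List.mem_cons_self,
      ih (by omega) fun l hl => hpre l (List.mem_cons_of_mem _ (by simpa using hl))⟩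

lemma auxAtoms_subset_of_closed_betaN (h : Closed W Z (betaN D n)) :
    auxAtoms D n Z ⊆ Z := by
  intro x hx
  cases x with
  | dlaw nm => cases nm with
    | inl d => exact h.fact_mem (fact_dlaw_mem_betaN hx)
    | inr s => exact hx.elim
  | slaw nm => cases nm with
    | inl d => exact hx.elim
    | inr s => exact h.fact_mem (fact_slaw_mem_betaN hx)
  | hd nm l =>
    obtain ⟨hnm, rfl⟩ := hx
    exact h.fact_mem (fact_hd_mem_betaN hnm)
  | act nm a => cases nm with
    | inl d =>
      obtain ⟨hd, rfl⟩ := hx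
      exact h.fact_mem (fact_act_mem_betaN hd)
    | inr s => exact hx.elim
  | prec nm N p =>
    obtain ⟨hnm, h1, h2, rfl⟩ := hx
    exact h.fact_mem (fact_prec_mem_betaN hnm h1 h2)
  | allh nm N t =>
    obtain ⟨hnm, ht, h1, h2, hpre⟩ := hx
    exact allh_mem_of_closed_betaN h hnm ht h1 h2 hpre
  | prech nm t =>
    obtain ⟨hnm, ht, hpre⟩ := hx
    refine h.head_mem (prech_mem_betaN nm ht) (fun _ => False.elim) ?_
    exact Set.singleton_subset_iff.2
      (allh_mem_of_closed_betaN h hnm ht le_rfl (by omega) (by simpa using hpre))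
  | _ => exact hx.elim

lemma Closed.diff_reified_betaNd (h : Closed W Z (betaN D n)) :
    Closed W (Z \ {x | ReifiedAtom x}) (betaNd D n) := by
  have haux := auxAtoms_subset_of_closed_betaN h
  rintro r ((((⟨d, hd, t, ht, rfl⟩ | ⟨s, hs, t, ht, rfl⟩) | ⟨i, hi, t, ht, rfl⟩) |
    ⟨l, t, ht, rfl⟩) | ⟨l, t, ht, rfl⟩) hneg hpos
  · have hpre : ∀ l ∈ d.pre, .h l t ∈ Z := fun l hl => (hpos (Or.inl ⟨l, hl, rfl⟩)).1
    refine ⟨_, rfl, h.head_mem (dynInterp_mem_betaN (.inl d) d.hd d.act ht) hneg ?_, not_false⟩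
    simp only [Set.insert_subset_iff, Set.singleton_subset_iff]
    exact ⟨h.fact_mem (fact_dlaw_mem_betaN hd),
      h.fact_mem (fact_hd_mem_betaN (nm := .inl d) hd), h.fact_mem (fact_act_mem_betaN hd),
      (hpos (Or.inr rfl)).1, haux ⟨hd, ht.le, hpre⟩⟩
  · have hpre : ∀ l ∈ s.pre, .h l t ∈ Z := fun l hl => (hpos ⟨l, hl, rfl⟩).1
    refine ⟨_, rfl, h.head_mem (statInterp_mem_betaN (.inr s) s.hd ht) hneg ?_, not_false⟩
    simp only [Set.insert_subset_iff, Set.singleton_subset_iff]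
    exact ⟨h.fact_mem (fact_slaw_mem_betaN hs),
      h.fact_mem (fact_hd_mem_betaN (nm := .inr s) hs), haux ⟨hs, ht, hpre⟩⟩
  · exact (h.body_not_subset (impConstraint_mem_betaN hi ht) hneg
      (hpos.trans Set.sdiff_subset)).elim
  · exact ⟨_, rfl, h.head_mem (inertia_mem_betaN l ht) hneg (hpos.trans Set.sdiff_subset),
      not_false⟩
  · exact (h.body_not_subset (consistency_mem_betaN l ht) hneg
      (hpos.trans Set.sdiff_subset)).elim

lemma mem_of_mem_union_auxAtoms {x : AtomR A F} (hx : x ∈ Z ∪ auxAtoms D n Z)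
    (hnr : ¬ ReifiedAtom x) : x ∈ Z :=
  hx.resolve_right fun h => hnr (auxAtoms_subset_reified h)

lemma mem_auxAtoms_of_mem_union (hZ : Disjoint Z {x | ReifiedAtom x}) {x : AtomR A F}
    (hx : x ∈ Z ∪ auxAtoms D n Z) (hr : ReifiedAtom x) : x ∈ auxAtoms D n Z :=
  hx.resolve_left fun h => Set.disjoint_left.1 hZ h hr

lemma closed_alphaSD_union_auxAtoms (h : Closed W Z (betaNd D n)) :
    Closed W (Z ∪ auxAtoms D n Z) (alphaSD D n) := by
  rintro r ((⟨d, hd, (rfl | rfl | rfl | hr)⟩ | ⟨s, hs, (rfl | rfl | hr)⟩) | ⟨i, hi, t, ht, rfl⟩)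
    hneg hpos
  · exact ⟨_, rfl, Or.inr hd⟩
  · exact ⟨_, rfl, Or.inr ⟨hd, rfl⟩⟩
  · exact ⟨_, rfl, Or.inr ⟨hd, rfl⟩⟩
  · obtain ⟨N, h1, h2, rfl⟩ := mem_precFacts_iff.1 hr
    exact ⟨_, rfl, Or.inr ⟨hd, h1, h2, rfl⟩⟩
  · exact ⟨_, rfl, Or.inr hs⟩
  · exact ⟨_, rfl, Or.inr ⟨hs, rfl⟩⟩
  · obtain ⟨N, h1, h2, rfl⟩ := mem_precFacts_iff.1 hr
    exact ⟨_, rfl, Or.inr ⟨hs, h1, h2, rfl⟩⟩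
  · refine (h.body_not_subset (impConstraint_mem_betaNd hi ht) hneg fun x hx => ?_).elim
    refine mem_of_mem_union_auxAtoms (hpos hx) ?_
    rcases hx with ⟨l, -, rfl⟩ | rfl <;> exact not_false

lemma allh_mem_auxAtoms_of_cons {nm : LawName A F} {N t : ℕ} {p : FLit F}
    (hprec : .prec nm N (some p) ∈ auxAtoms D n S) (hp : .h p t ∈ S)
    (hnext : .allh nm (N + 1) t ∈ auxAtoms D n S) : .allh nm N t ∈ auxAtoms D n S := by
  obtain ⟨hnm, h1, h2, hsome⟩ := hprec
  obtain ⟨-, ht, -, -, hrest⟩ := hnext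
  have hlt : N - 1 < (lawPre nm).length := (List.getElem?_eq_some_iff.1 hsome.symm).1
  rw [List.getElem?_eq_getElem hlt, Option.some_inj] at hsome
  refine ⟨hnm, ht, h1, h2, ?_⟩
  rw [List.drop_eq_getElem_cons hlt, Nat.sub_add_cancel h1, ← hsome]
  intro l hl
  rcases List.mem_cons.1 hl with rfl | hl
  · exact hp
  · exact hrest l (by simpa using hl)

lemma allh_mem_auxAtoms_of_nil {nm : LawName A F} {N t : ℕ}
    (hprec : .prec nm N none ∈ auxAtoms D n S) (ht : t ≤ n) :
    .allh nm N t ∈ auxAtoms D n S := by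
  obtain ⟨hnm, h1, h2, hnone⟩ := hprec
  have hN : (lawPre nm).length ≤ N - 1 := List.getElem?_eq_none_iff.1 hnone.symm
  refine ⟨hnm, ht, h1, h2, fun l hl => ?_⟩
  simp [List.drop_eq_nil_of_le hN] at hl

lemma prech_mem_auxAtoms_of_allh {nm : LawName A F} {t : ℕ}
    (hall : .allh nm 1 t ∈ auxAtoms D n S) : .prech nm t ∈ auxAtoms D n S := by
  obtain ⟨hnm, ht, -, -, hpre⟩ := hall
  exact ⟨hnm, ht, by simpa using hpre⟩

lemma closed_interp_union_auxAtoms (hZ : Disjoint Z {x | ReifiedAtom x})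
    (h : Closed W Z (betaNd D n)) : Closed W (Z ∪ auxAtoms D n Z) (interp A F n) := by
  have memZ : ∀ {x}, x ∈ Z ∪ auxAtoms D n Z → ¬ ReifiedAtom x → x ∈ Z :=
    mem_of_mem_union_auxAtoms
  have memAux : ∀ {x}, x ∈ Z ∪ auxAtoms D n Z → ReifiedAtom x → x ∈ auxAtoms D n Z :=
    mem_auxAtoms_of_mem_union hZ
  rintro r ((((((⟨nm, l, a, t, ht, rfl⟩ | ⟨nm, l, t, ht, rfl⟩) | ⟨nm, N, t, ht, rfl⟩) |
    ⟨nm, N, p, t, ht, rfl⟩) | ⟨nm, t, ht, rfl⟩) | ⟨l, t, ht, rfl⟩) | ⟨l, t, ht, rfl⟩)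
    hneg hpos <;> simp only [Set.insert_subset_iff, Set.singleton_subset_iff] at hpos
  · obtain ⟨hdl, hhd, hact, ho, hprech⟩ := hpos
    rcases nm with d | s
    · have hd : d ∈ D.dyn := memAux hdl trivial
      obtain ⟨-, rfl⟩ := memAux hhd trivial
      obtain ⟨-, rfl⟩ := memAux hact trivial
      obtain ⟨-, -, hpre⟩ := memAux hprech trivial
      refine ⟨_, rfl, Or.inl (h.head_mem (dynRule_mem_betaNd hd ht) hneg ?_)⟩
      exact Set.union_subset (by rintro _ ⟨l, hl, rfl⟩; exact hpre l hl)
        (Set.singleton_subset_iff.2 (memZ ho not_false))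
    · exact (memAux hdl trivial).elim
  · obtain ⟨hsl, hhd, hprech⟩ := hpos
    rcases nm with d | s
    · exact (memAux hsl trivial).elim
    · have hs : s ∈ D.stat := memAux hsl trivial
      obtain ⟨-, rfl⟩ := memAux hhd trivial
      obtain ⟨-, -, hpre⟩ := memAux hprech trivial
      refine ⟨_, rfl, Or.inl (h.head_mem (statRule_mem_betaNd hs ht) hneg ?_)⟩
      rintro _ ⟨l, hl, rfl⟩
      exact hpre l hl
  · exact ⟨_, rfl, Or.inr (allh_mem_auxAtoms_of_nil (memAux hpos trivial) ht)⟩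
  · obtain ⟨hprec, hp, hnext⟩ := hpos
    exact ⟨_, rfl, Or.inr (allh_mem_auxAtoms_of_cons (memAux hprec trivial) (memZ hp not_false)
      (memAux hnext trivial))⟩
  · exact ⟨_, rfl, Or.inr (prech_mem_auxAtoms_of_allh (memAux hpos trivial))⟩
  · exact ⟨_, rfl, Or.inl (h.head_mem (inertia_mem_betaNd l ht) hneg
      (Set.singleton_subset_iff.2 (memZ hpos not_false)))⟩
  · refine (h.body_not_subset (consistency_mem_betaNd l ht) hneg ?_).elim
    simp only [Set.insert_subset_iff, Set.singleton_subset_iff]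
    exact ⟨memZ hpos.1 not_false, memZ hpos.2 not_false⟩

def betaNAuxCompletion (D : ActionDescr A F) (n : ℕ) :
    AuxCompletion (betaNd D n) (betaN D n) {x | ReifiedAtom x} where
  aux := auxAtoms D n
  aux_subset _ := auxAtoms_subset_reified
  aux_mono := auxAtoms_mono
  neg_notMem := betaNd_neg_not_reified
  head_notMem := betaNd_head_not_reified
  aux_subset_of_closed _ _ := auxAtoms_subset_of_closed_betaN
  closed_diff _ _ := Closed.diff_reified_betaNd
  closed_union_aux _ _ hZ h :=
    closed_union_iff.2 ⟨closed_alphaSD_union_auxAtoms h, closed_interp_union_auxAtoms hZ h⟩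

end Reified

/-- for `Q` the set of reified auxiliary literals and any
program `R` whose literals are disjoint from `Q`, `β^n ∪ R` is a strong
conservative extension of `β^n_d ∪ R` with respect to `Q`. -/
theorem betaN_strong_conservative_extension {A F : Type} (D : ActionDescr A F)
    (n : ℕ) (R : Set (ASPRule (AtomR A F)))
    (hR : ∀ r ∈ R, ∀ x ∈ ruleLits r, ¬ ReifiedAtom x) :
    (∀ X : Set (AtomR A F), AnswerSet (betaN D n ∪ R) X →
        AnswerSet (betaNd D n ∪ R) (X \ { x | ReifiedAtom x })) ∧
    (∀ X : Set (AtomR A F), AnswerSet (betaNd D n ∪ R) X →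
        ∃ B ⊆ { x : AtomR A F | ReifiedAtom x },
          AnswerSet (betaN D n ∪ R) (X ∪ B)) :=
  ((betaNAuxCompletion D n).union hR).isConservativeExtension
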